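/- Let (L_i) for i ≥ 0 be a family of finite sets of lines where each ℓ ∈ L_i has weight w(ℓ) with 2^i ≤ w(ℓ) < 2^{i+1}, and let |L|₁ = Σ_ℓ w(ℓ) and |L|₂² = Σ_ℓ w(ℓ)². Then Σ_i 2^i |L_i|^{2/3} = O(|L|₁^{1/3} |L|₂^{2/3}). -/

import Mathlib

/-!
Scale `i` contributes `tᵢ = 2^i |L_i|^{2/3}`. Since `2^i |L_i| ≤ |L|₁` and `4^i |L_i| ≤ |L|₂²`,
`tᵢ ≤ |L|₁^{2/3} r^i` and `tᵢ ≤ |L|₂^{4/3} r^{-i}` with `r = 2^{1/3}`. Below the crossing point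
of these two bounds the first is geometric and at most their geometric mean
`|L|₁^{1/3} |L|₂^{2/3}`, above it the second is, so the sum is at most `2r/(r-1)` times that mean.
-/

open Finset

lemma le_sqrt_mul_of_le {a b : ℝ} (ha : 0 ≤ a) (hab : a ≤ b) : a ≤ √(a * b) :=
  Real.le_sqrt_of_sq_le (by nlinarith)

lemma sum_mul_pow_le_of_forall_le {r c s : ℝ} (hr : 1 < r) (hc : 0 ≤ c) (hs : 0 ≤ s)
    (S : Finset ℕ) (h : ∀ i ∈ S, c * r ^ i ≤ s) :
    ∑ i ∈ S, c * r ^ i ≤ r / (r - 1) * s := by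
  have hr1 : 0 < r - 1 := sub_pos.2 hr
  obtain rfl | hS := S.eq_empty_or_nonempty
  · rw [sum_empty]; positivity
  set M := S.max' hS
  calc ∑ i ∈ S, c * r ^ i ≤ ∑ i ∈ range (M + 1), c * r ^ i :=
        sum_le_sum_of_subset_of_nonneg
          (fun i hi => mem_range.2 (Nat.lt_succ_of_le (S.le_max' i hi)))
          fun i _ _ => by positivity
    _ = c * ((r ^ (M + 1) - 1) / (r - 1)) := by rw [← mul_sum, geom_sum_eq hr.ne']
    _ ≤ c * (r ^ (M + 1) / (r - 1)) := by gcongr; linarith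
    _ = r / (r - 1) * (c * r ^ M) := by rw [pow_succ]; ring
    _ ≤ r / (r - 1) * s := by gcongr; exact h M (S.max'_mem hS)

lemma sum_mul_inv_pow_le_of_forall_le {r c s : ℝ} (hr : 1 < r) (hc : 0 ≤ c) (hs : 0 ≤ s)
    (S : Finset ℕ) (h : ∀ i ∈ S, c * r⁻¹ ^ i ≤ s) :
    ∑ i ∈ S, c * r⁻¹ ^ i ≤ r / (r - 1) * s := by
  have hr1 : 0 < r - 1 := sub_pos.2 hr
  have hq0 : 0 ≤ r⁻¹ := inv_nonneg.2 (by linarith)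
  have hq1 : r⁻¹ < 1 := inv_lt_one_of_one_lt₀ hr
  obtain rfl | hS := S.eq_empty_or_nonempty
  · rw [sum_empty]; positivity
  set m := S.min' hS
  have hsub : S ⊆ Ico m (S.max' hS + 1) := fun i hi =>
    mem_Ico.2 ⟨S.min'_le i hi, Nat.lt_succ_of_le (S.le_max' i hi)⟩
  calc ∑ i ∈ S, c * r⁻¹ ^ i ≤ ∑ i ∈ Ico m (S.max' hS + 1), c * r⁻¹ ^ i :=
        sum_le_sum_of_subset_of_nonneg hsub fun i _ _ => by positivity
    _ ≤ c * (r⁻¹ ^ m / (1 - r⁻¹)) := by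
        rw [← mul_sum]; gcongr; exact geom_sum_Ico_le_of_lt_one hq0 hq1
    _ = r / (r - 1) * (c * r⁻¹ ^ m) := by field_simp
    _ ≤ r / (r - 1) * s := by gcongr; exact h m (S.min'_mem hS)

/-- Where `x r^i ≤ y r^{-i}`, the smaller bound `x r^i` is at most `√(x * y)` because the product
of the two bounds is `x * y`; symmetrically on the other side. -/
theorem sum_le_of_le_mul_pow_of_le_mul_inv_pow {r x y : ℝ} (hr : 1 < r) (hx : 0 ≤ x)
    (hy : 0 ≤ y) (S : Finset ℕ) (f : ℕ → ℝ) (hfx : ∀ i ∈ S, f i ≤ x * r ^ i)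
    (hfy : ∀ i ∈ S, f i ≤ y * r⁻¹ ^ i) :
    ∑ i ∈ S, f i ≤ 2 * r / (r - 1) * √(x * y) := by
  have hr0 : 0 ≤ r := by linarith
  have hprod (i : ℕ) : x * r ^ i * (y * r⁻¹ ^ i) = x * y := by
    rw [inv_pow, mul_mul_mul_comm, mul_inv_cancel₀ (pow_ne_zero _ (by linarith)), mul_one]
  set low := S.filter fun i => x * r ^ i ≤ y * r⁻¹ ^ i
  set high := S.filter fun i => ¬x * r ^ i ≤ y * r⁻¹ ^ i
  have hlow := sum_mul_pow_le_of_forall_le hr hx (Real.sqrt_nonneg (x * y)) low fun i hi => by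
    rw [← hprod i]; exact le_sqrt_mul_of_le (by positivity) (mem_filter.1 hi).2
  have hhigh := sum_mul_inv_pow_le_of_forall_le hr hy (Real.sqrt_nonneg (x * y)) high
    fun i hi => by
      rw [← hprod i, mul_comm (x * r ^ i)]
      exact le_sqrt_mul_of_le (by positivity) (not_le.1 (mem_filter.1 hi).2).le
  calc ∑ i ∈ S, f i = ∑ i ∈ low, f i + ∑ i ∈ high, f i := (sum_filter_add_sum_filter_not _ _ _).symm
    _ ≤ ∑ i ∈ low, x * r ^ i + ∑ i ∈ high, y * r⁻¹ ^ i := by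
        gcongr with i hi i hi
        · exact hfx i (mem_filter.1 hi).1
        · exact hfy i (mem_filter.1 hi).1
    _ ≤ r / (r - 1) * √(x * y) + r / (r - 1) * √(x * y) := add_le_add hlow hhigh
    _ = 2 * r / (r - 1) * √(x * y) := by ring

lemma mul_rpow_le_of_pow_mul_le {t n M θ : ℝ} (ht : 0 < t) (hn : 0 ≤ n) (hθ : 0 ≤ θ) (p : ℕ)
    (h : t ^ p * n ≤ M) : t * n ^ θ ≤ M ^ θ * t ^ (1 - p * θ) := by
  have hsplit : t * n ^ θ = (t ^ p * n) ^ θ * t ^ (1 - p * θ) := by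
    rw [Real.mul_rpow (by positivity) hn, ← Real.rpow_natCast_mul ht.le, mul_right_comm,
      ← Real.rpow_add ht]
    simp
  rw [hsplit]
  gcongr

section WeightedFamily

variable {ι α : Type*} {I : Finset ι} {L : ι → Finset α} {w : α → ℝ} {a : ι → ℝ}

lemma pow_mul_card_le_sum_pow {s : Finset α} {b : ℝ} (hb : 0 ≤ b) (h : ∀ ℓ ∈ s, b ≤ w ℓ)
    (k : ℕ) : b ^ k * #s ≤ ∑ ℓ ∈ s, w ℓ ^ k := by
  rw [mul_comm, ← nsmul_eq_mul]
  exact card_nsmul_le_sum _ _ _ fun ℓ hℓ => pow_le_pow_left₀ hb (h ℓ hℓ) k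

lemma sum_sum_pow_nonneg (ha : ∀ i, 0 ≤ a i) (hw : ∀ i, ∀ ℓ ∈ L i, a i ≤ w ℓ) (k : ℕ)
    (i : ι) : 0 ≤ ∑ ℓ ∈ L i, w ℓ ^ k :=
  (mul_nonneg (pow_nonneg (ha i) k) (Nat.cast_nonneg _)).trans
    (pow_mul_card_le_sum_pow (ha i) (hw i) k)

lemma pow_mul_card_le_sum_sum_pow (ha : ∀ i, 0 ≤ a i) (hw : ∀ i, ∀ ℓ ∈ L i, a i ≤ w ℓ)
    (k : ℕ) {i : ι} (hi : i ∈ I) : a i ^ k * #(L i) ≤ ∑ j ∈ I, ∑ ℓ ∈ L j, w ℓ ^ k :=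
  (pow_mul_card_le_sum_pow (ha i) (hw i) k).trans
    (single_le_sum (fun j _ => sum_sum_pow_nonneg ha hw k j) hi)

end WeightedFamily

theorem dyadic_weight_sum_bound :
    ∃ C > (0:ℝ), ∀ (α : Type) (L : ℕ → Finset α) (w : α → ℝ) (N : ℕ),
      (∀ i, ∀ ℓ ∈ L i, (2:ℝ) ^ i ≤ w ℓ ∧ w ℓ < 2 ^ (i + 1)) →
      (∀ i, N ≤ i → L i = ∅) →
      ∑ i ∈ Finset.range N, (2:ℝ) ^ i * ((L i).card : ℝ) ^ ((2:ℝ)/3) ≤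
        C * (∑ i ∈ Finset.range N, ∑ ℓ ∈ L i, w ℓ) ^ ((1:ℝ)/3) *
          (∑ i ∈ Finset.range N, ∑ ℓ ∈ L i, (w ℓ) ^ 2) ^ ((1:ℝ)/3) := by
  set r : ℝ := 2 ^ ((1:ℝ)/3) with hr_def
  have hr : 1 < r := Real.one_lt_rpow one_lt_two (by norm_num)
  have hr_up : (2:ℝ) ^ (1 - ((1:ℕ):ℝ) * (2/3)) = r := by rw [hr_def]; norm_num
  have hr_down : (2:ℝ) ^ (1 - ((2:ℕ):ℝ) * (2/3)) = r⁻¹ := by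
    rw [hr_def, ← Real.rpow_neg zero_le_two]; norm_num
  have hpow (i : ℕ) (e : ℝ) : ((2:ℝ) ^ i) ^ e = ((2:ℝ) ^ e) ^ i :=
    (Real.rpow_pow_comm zero_le_two e i).symm
  refine ⟨2 * r / (r - 1), div_pos (by linarith) (sub_pos.2 hr), fun α L w N hw _ => ?_⟩
  have h2 (i : ℕ) : 0 ≤ (2:ℝ) ^ i := by positivity
  have hw' (i : ℕ) : ∀ ℓ ∈ L i, (2:ℝ) ^ i ≤ w ℓ := fun ℓ hℓ => (hw i ℓ hℓ).1
  have hA0 := sum_nonneg fun j (_ : j ∈ range N) => sum_sum_pow_nonneg h2 hw' 1 j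
  simp only [pow_one] at hA0
  calc _ ≤ 2 * r / (r - 1) * √((∑ i ∈ range N, ∑ ℓ ∈ L i, w ℓ) ^ ((2:ℝ)/3) *
          (∑ i ∈ range N, ∑ ℓ ∈ L i, w ℓ ^ 2) ^ ((2:ℝ)/3)) := by
        refine sum_le_of_le_mul_pow_of_le_mul_inv_pow hr (by positivity) (by positivity) _ _
          (fun i hi => ?_) (fun i hi => ?_)
        · have := mul_rpow_le_of_pow_mul_le (by positivity) (Nat.cast_nonneg _) (θ := 2/3) (by norm_num) 1
            (pow_mul_card_le_sum_sum_pow h2 hw' 1 hi)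
          rw [hpow, hr_up] at this
          simpa only [pow_one] using this
        · have := mul_rpow_le_of_pow_mul_le (by positivity) (Nat.cast_nonneg _) (θ := 2/3) (by norm_num) 2
            (pow_mul_card_le_sum_sum_pow h2 hw' 2 hi)
          rwa [hpow, hr_down] at this
    _ = _ := by
        rw [Real.sqrt_eq_rpow, Real.mul_rpow (by positivity) (by positivity),
          ← Real.rpow_mul hA0, ← Real.rpow_mul (sum_nonneg fun _ _ => by positivity)]
        norm_num
        ring
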